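/- Let q ≥ 1. The map B carries the frontier of the open unit cube into the frontier of the invertible region: B(∂D_ζ) ⊆ ∂D_θ. -/

import Mathlib

/-- Forward recursion for the Barndorff-Nielsen–Schou / Monahan transformation:
`fwdRow ζ k i = θ_{i,k}` (1-based), with `θ_{k,k} = ζ_k` and
`θ_{i,k} = θ_{i,k-1} - ζ_k * θ_{k-i,k-1}` for `1 ≤ i ≤ k-1`. -/
noncomputable def fwdRow (ζ : ℕ → ℝ) : ℕ → ℕ → ℝ
  | 0 => fun _ => 0
  | (k+1) => fun i =>
      if i = k + 1 then ζ (k + 1)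
      else fwdRow ζ k i - ζ (k + 1) * fwdRow ζ k (k + 1 - i)

open Classical in
/-- Reverse recursion: `(invAux q θ d).1` is row `q - d` (i.e. `θ_{·, q-d}`), and
`(invAux q θ d).2` is the proposition that `|θ_{j,j}| < 1` for all `j` with `q - d ≤ j ≤ q`.
Row `q-(d+1)` is given by `θ_{i,k-1} = (θ_{i,k} + θ_{k,k} θ_{k-i,k})/(1-θ_{k,k}^2)` with
`k = q - d` when the diagonal condition holds at all levels `≥ k`, and is `0` otherwise. -/
noncomputable def invAux (q : ℕ) (θ : ℕ → ℝ) : ℕ → (ℕ → ℝ) × Prop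
  | 0 => (θ, |θ q| < 1)
  | (d+1) =>
      let p := invAux q θ d
      let row : ℕ → ℝ := fun i =>
        if p.2 then (p.1 i + p.1 (q - d) * p.1 (q - d - i)) / (1 - (p.1 (q - d)) ^ 2)
        else 0
      (row, p.2 ∧ |row (q - d - 1)| < 1)

/-- Interpret a vector in `ℝ^q` as a 1-based sequence `ℕ → ℝ` (value `0` out of range). -/
def toSeq {q : ℕ} (v : Fin q → ℝ) : ℕ → ℝ :=
  fun n => if h : n - 1 < q then v ⟨n - 1, h⟩ else 0

/-- The map `B : ℝ^q → ℝ^q`, `B(ζ)_i = θ_{i,q}`. -/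
noncomputable def Bmap {q : ℕ} (ζ : Fin q → ℝ) : Fin q → ℝ :=
  fun i => fwdRow (toSeq ζ) q (i.1 + 1)

/-- The map `B⁻ : ℝ^q → ℝ^q`, `B⁻(θ)_i = θ_{i,i}` computed by the reverse recursion. -/
noncomputable def Binv {q : ℕ} (θ : Fin q → ℝ) : Fin q → ℝ :=
  fun i => (invAux q (toSeq θ) (q - (i.1 + 1))).1 (i.1 + 1)

/-- The invertible region `D_θ ⊆ ℝ^q`: all complex roots of
`θ(z) = 1 - θ_1 z - ⋯ - θ_q z^q` satisfy `|z| > 1`. -/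
def invRegion (q : ℕ) : Set (Fin q → ℝ) :=
  {θ | ∀ z : ℂ, 1 - ∑ i : Fin q, (θ i : ℂ) * z ^ (i.1 + 1) = 0 → 1 < ‖z‖}

/-- The open unit cube `D_ζ = (-1,1)^q ⊆ ℝ^q`. -/
def openCube (q : ℕ) : Set (Fin q → ℝ) :=
  {ζ | ∀ i, ζ i ∈ Set.Ioo (-1 : ℝ) 1}

/-!
Write `θ_k` for the moving-average polynomial of the `k`-th row of the recursion and
`θ̃_k(z) = z^k θ_k(1/z)`; the recursion reads `θ_{k+1} = θ_k - ζ_{k+1} z θ̃_k` and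
`θ̃_{k+1} = z θ̃_k - ζ_{k+1} θ_k`. On the closed unit disk `|z θ̃_k| ≤ |θ_k|`, and a step with
`|ζ_{k+1}| ≤ 1` preserves this inequality (Schur–Cohn); with `|ζ_{k+1}| < 1` it also keeps
`θ_{k+1}` nonzero. Hence `B` maps the open cube into `D_θ`, and by continuity its closure into
the closure of `D_θ`. On the frontier of the cube some `ζ_j = ±1`; then `θ_j` and `θ̃_j` have a
common zero in the closed disk, which the recursion passes on to `θ_q`, so `B ζ ∉ D_θ`.
-/

open Finset Polynomial

lemma Complex.exists_root_sum_range (a : ℕ → ℂ) {n : ℕ} (hn : 0 < n) (ha : a n ≠ 0) :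
    ∃ z : ℂ, ∑ i ∈ range (n + 1), a i * z ^ i = 0 := by
  set P : ℂ[X] := ∑ i ∈ range (n + 1), C (a i) * X ^ i
  have hcoeff : P.coeff n = a n := by simp [P, finsetSum_coeff]
  have hdeg : 0 < P.degree :=
    (WithBot.coe_lt_coe.2 hn).trans_le (le_degree_of_ne_zero (hcoeff ▸ ha))
  obtain ⟨z, hz⟩ := Complex.exists_root hdeg
  exact ⟨z, by simpa [P, eval_finsetSum] using hz⟩

lemma norm_sub_ofReal_mul_le_swap {c : ℝ} (hc : |c| ≤ 1) {A B : ℂ} (h : ‖B‖ ≤ ‖A‖) :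
    ‖B - c * A‖ ≤ ‖A - c * B‖ := by
  have key : ‖A - c * B‖ ^ 2 - ‖B - c * A‖ ^ 2 = (1 - c ^ 2) * (‖A‖ ^ 2 - ‖B‖ ^ 2) := by
    simp only [← Complex.normSq_eq_norm_sq, Complex.normSq_apply, Complex.sub_re,
      Complex.sub_im, Complex.mul_re, Complex.mul_im, Complex.ofReal_re, Complex.ofReal_im]
    ring
  have hc2 : c ^ 2 ≤ 1 := (sq_le_one_iff_abs_le_one c).2 hc
  have hAB : ‖B‖ ^ 2 ≤ ‖A‖ ^ 2 := pow_le_pow_left₀ (norm_nonneg B) h 2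
  refine (sq_le_sq₀ (norm_nonneg _) (norm_nonneg _)).1 ?_
  nlinarith

/-- `θ_k(z)`, the moving-average polynomial of the `k`-th row of the recursion. -/
noncomputable def maPoly (ζ : ℕ → ℝ) (k : ℕ) (z : ℂ) : ℂ :=
  1 - ∑ i ∈ range k, (fwdRow ζ k (i + 1) : ℂ) * z ^ (i + 1)

/-- `θ̃_k(z) = z^k θ_k(1/z)`. -/
noncomputable def maPolyRev (ζ : ℕ → ℝ) (k : ℕ) (z : ℂ) : ℂ :=
  z ^ k - ∑ i ∈ range k, (fwdRow ζ k (i + 1) : ℂ) * z ^ (k - 1 - i)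

section Recursion

variable (ζ : ℕ → ℝ) (k : ℕ)

lemma fwdRow_succ_self : fwdRow ζ (k + 1) (k + 1) = ζ (k + 1) := by
  simp [fwdRow]

lemma fwdRow_succ_of_lt {i : ℕ} (h : i < k) :
    fwdRow ζ (k + 1) (i + 1) = fwdRow ζ k (i + 1) - ζ (k + 1) * fwdRow ζ k (k - i) := by
  simp [fwdRow, show i ≠ k by omega, show k + 1 - (i + 1) = k - i by omega]

lemma maPoly_zero (z : ℂ) : maPoly ζ 0 z = 1 := by
  simp [maPoly]

lemma maPolyRev_zero (z : ℂ) : maPolyRev ζ 0 z = 1 := by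
  simp [maPolyRev]

lemma mul_maPolyRev (z : ℂ) :
    z * maPolyRev ζ k z = z ^ (k + 1) - ∑ i ∈ range k, (fwdRow ζ k (i + 1) : ℂ) * z ^ (k - i) := by
  rw [maPolyRev, mul_sub, mul_sum, ← pow_succ']
  congr 1
  refine sum_congr rfl fun i hi => ?_
  rw [show k - i = k - 1 - i + 1 by grind, pow_succ]
  ring

lemma maPoly_succ (z : ℂ) :
    maPoly ζ (k + 1) z = maPoly ζ k z - ζ (k + 1) * (z * maPolyRev ζ k z) := by
  have hrefl : ∑ i ∈ range k, (fwdRow ζ k (k - i) : ℂ) * z ^ (i + 1)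
      = ∑ i ∈ range k, (fwdRow ζ k (i + 1) : ℂ) * z ^ (k - i) := by
    rw [← sum_range_reflect]
    refine sum_congr rfl fun i hi => ?_
    rw [show k - 1 - i + 1 = k - i by grind, show k - (k - 1 - i) = i + 1 by grind]
  rw [mul_maPolyRev, maPoly, maPoly, sum_range_succ, fwdRow_succ_self,
    sum_congr rfl fun i hi => by rw [fwdRow_succ_of_lt ζ k (mem_range.1 hi)]]
  push_cast
  simp only [sub_mul, sum_sub_distrib, mul_assoc, ← mul_sum, hrefl]
  ring

lemma maPolyRev_succ (z : ℂ) :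
    maPolyRev ζ (k + 1) z = z * maPolyRev ζ k z - ζ (k + 1) * maPoly ζ k z := by
  have hrefl : ∑ i ∈ range k, (fwdRow ζ k (k - i) : ℂ) * z ^ (k - i)
      = ∑ i ∈ range k, (fwdRow ζ k (i + 1) : ℂ) * z ^ (i + 1) := by
    rw [← sum_range_reflect]
    refine sum_congr rfl fun i hi => ?_
    rw [show k - (k - 1 - i) = i + 1 by grind]
  rw [mul_maPolyRev, maPoly, maPolyRev, sum_range_succ, fwdRow_succ_self,
    sum_congr rfl fun i hi => by
      rw [fwdRow_succ_of_lt ζ k (mem_range.1 hi), show k + 1 - 1 - i = k - i by grind]]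
  push_cast
  simp only [sub_mul, sum_sub_distrib, mul_assoc, ← mul_sum, hrefl, Nat.sub_self, pow_zero]
  ring

end Recursion

section DiskRoots

variable {ζ : ℕ → ℝ}

lemma norm_maPolyRev_le_and_maPoly_ne_zero {k : ℕ} (hζ : ∀ i ∈ Icc 1 k, |ζ i| < 1) {z : ℂ}
    (hz : ‖z‖ ≤ 1) : ‖maPolyRev ζ k z‖ ≤ ‖maPoly ζ k z‖ ∧ maPoly ζ k z ≠ 0 := by
  induction k with
  | zero => simp [maPoly_zero, maPolyRev_zero]
  | succ k ih =>
    obtain ⟨hle, hne⟩ := ih fun i hi => hζ i (by grind)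
    have hc : |ζ (k + 1)| < 1 := hζ (k + 1) (by simp)
    have hzT : ‖z * maPolyRev ζ k z‖ ≤ ‖maPoly ζ k z‖ := by
      rw [norm_mul]
      exact (mul_le_mul hz hle (norm_nonneg _) zero_le_one).trans_eq (one_mul _)
    have hlt : ‖(ζ (k + 1) : ℂ) * (z * maPolyRev ζ k z)‖ < ‖maPoly ζ k z‖ := by
      rw [norm_mul, Complex.norm_real, Real.norm_eq_abs]
      calc |ζ (k + 1)| * ‖z * maPolyRev ζ k z‖ ≤ |ζ (k + 1)| * ‖maPoly ζ k z‖ := by gcongr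
        _ < ‖maPoly ζ k z‖ := mul_lt_of_lt_one_left (norm_pos_iff.2 hne) hc
    rw [maPoly_succ, maPolyRev_succ]
    refine ⟨norm_sub_ofReal_mul_le_swap hc.le hzT, fun h => ?_⟩
    rw [sub_eq_zero] at h
    exact hlt.ne (congrArg norm h).symm

lemma maPolyRev_eq_pow_mul_maPoly_inv (k : ℕ) {z : ℂ} (hz : z ≠ 0) :
    maPolyRev ζ k z = z ^ k * maPoly ζ k z⁻¹ := by
  rw [maPolyRev, maPoly, mul_sub, mul_one, mul_sum]
  congr 1
  refine sum_congr rfl fun i hi => ?_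
  rw [inv_pow, show k = (k - 1 - i) + (i + 1) by grind, pow_add]
  field_simp
  rw [show k - 1 - i + (i + 1) - 1 - i = k - 1 - i by grind]

lemma maPoly_eq_sum_range (k : ℕ) (z : ℂ) :
    maPoly ζ k z = ∑ i ∈ range (k + 1), (if i = 0 then 1 else -(fwdRow ζ k i : ℂ)) * z ^ i := by
  simp [maPoly, sum_range_succ', sub_eq_neg_add]

lemma exists_maPoly_eq_zero {m : ℕ} (hζ : ζ (m + 1) ≠ 0) : ∃ w, maPoly ζ (m + 1) w = 0 := by
  simp only [maPoly_eq_sum_range]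
  refine Complex.exists_root_sum_range _ m.succ_pos ?_
  simpa [fwdRow_succ_self] using hζ

lemma maPolyRev_succ_eq_of_sq_eq_one {m : ℕ} (hζ : ζ (m + 1) ^ 2 = 1) (z : ℂ) :
    maPolyRev ζ (m + 1) z = -ζ (m + 1) * maPoly ζ (m + 1) z := by
  have hC : (ζ (m + 1) : ℂ) ^ 2 = 1 := by exact_mod_cast hζ
  rw [maPoly_succ, maPolyRev_succ]
  linear_combination -(z * maPolyRev ζ m z) * hC

/-- Here `θ̃_{m+1} = ∓θ_{m+1}`, so the zeros of `θ_{m+1}` come in pairs `w, 1/w`. -/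
lemma exists_common_root_of_abs_eq_one {m : ℕ} (hζ : |ζ (m + 1)| = 1) :
    ∃ z : ℂ, ‖z‖ ≤ 1 ∧ maPoly ζ (m + 1) z = 0 ∧ maPolyRev ζ (m + 1) z = 0 := by
  have hsq : ζ (m + 1) ^ 2 = 1 := by rw [← sq_abs, hζ, one_pow]
  have hrev : ∀ z, maPoly ζ (m + 1) z = 0 → maPolyRev ζ (m + 1) z = 0 := fun z h => by
    rw [maPolyRev_succ_eq_of_sq_eq_one hsq, h, mul_zero]
  obtain ⟨w, hw⟩ := exists_maPoly_eq_zero (ζ := ζ) (m := m) fun h => by simp [h] at hζ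
  rcases le_or_gt ‖w‖ 1 with hw1 | hw1
  · exact ⟨w, hw1, hw, hrev w hw⟩
  have hw0 : w ≠ 0 := by rintro rfl; norm_num at hw1
  have hinv : maPoly ζ (m + 1) w⁻¹ = 0 := by
    simpa [maPolyRev_eq_pow_mul_maPoly_inv _ hw0, hw0] using hrev w hw
  exact ⟨w⁻¹, by rw [norm_inv]; exact inv_le_one_of_one_le₀ hw1.le, hinv, hrev _ hinv⟩

lemma maPoly_eq_zero_of_common_root {j k : ℕ} {z : ℂ} (hjk : j ≤ k) (h : maPoly ζ j z = 0)
    (hrev : maPolyRev ζ j z = 0) : maPoly ζ k z = 0 ∧ maPolyRev ζ k z = 0 := by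
  induction k, hjk using Nat.le_induction with
  | base => exact ⟨h, hrev⟩
  | succ k _ ih => simp [maPoly_succ, maPolyRev_succ, ih.1, ih.2]

lemma exists_maPoly_eq_zero_of_abs_eq_one {j k : ℕ} (hj : j ∈ Icc 1 k) (hζ : |ζ j| = 1) :
    ∃ z : ℂ, ‖z‖ ≤ 1 ∧ maPoly ζ k z = 0 := by
  obtain ⟨m, rfl⟩ : ∃ m, j = m + 1 := ⟨j - 1, by grind⟩
  obtain ⟨z, hz, h, hrev⟩ := exists_common_root_of_abs_eq_one hζ
  exact ⟨z, hz, (maPoly_eq_zero_of_common_root (mem_Icc.1 hj).2 h hrev).1⟩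

end DiskRoots

section Cube

variable {q : ℕ}

lemma toSeq_succ (v : Fin q → ℝ) (i : Fin q) : toSeq v (i + 1) = v i := by
  simp [toSeq]

lemma continuous_fwdRow_toSeq (k i : ℕ) :
    Continuous fun v : Fin q → ℝ => fwdRow (toSeq v) k i := by
  have hseq : ∀ n, Continuous fun v : Fin q → ℝ => toSeq v n := fun n => by
    unfold toSeq; split_ifs <;> fun_prop
  induction k generalizing i with
  | zero => exact continuous_const
  | succ k ih =>
    simp only [fwdRow]
    split_ifs
    exacts [hseq _, (ih i).sub ((hseq _).mul (ih _))]

lemma continuous_Bmap : Continuous (Bmap : (Fin q → ℝ) → Fin q → ℝ) :=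
  continuous_pi fun i => continuous_fwdRow_toSeq q (i + 1)

lemma one_sub_sum_Bmap (v : Fin q → ℝ) (z : ℂ) :
    1 - ∑ i : Fin q, (Bmap v i : ℂ) * z ^ (i.1 + 1) = maPoly (toSeq v) q z := by
  rw [maPoly, ← Fin.sum_univ_eq_sum_range fun i => (fwdRow (toSeq v) q (i + 1) : ℂ) * z ^ (i + 1)]
  rfl

lemma Bmap_mem_invRegion {v : Fin q → ℝ} (hv : v ∈ openCube q) : Bmap v ∈ invRegion q := by
  intro z hz
  rw [one_sub_sum_Bmap] at hz
  by_contra! hz1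
  refine (norm_maPolyRev_le_and_maPoly_ne_zero (fun i hi => ?_) hz1).2 hz
  obtain ⟨j, rfl⟩ : ∃ j : Fin q, i = j + 1 := ⟨⟨i - 1, by grind⟩, by grind⟩
  rw [toSeq_succ, abs_lt]
  exact hv j

lemma Bmap_notMem_invRegion {v : Fin q → ℝ} {i : Fin q} (hi : |v i| = 1) :
    Bmap v ∉ invRegion q := fun hv => by
  obtain ⟨z, hz, hroot⟩ := exists_maPoly_eq_zero_of_abs_eq_one (ζ := toSeq v)
    (j := i + 1) (k := q) (by simp [Nat.succ_le_of_lt i.2]) (by rwa [toSeq_succ])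
  exact (hv z (by rwa [one_sub_sum_Bmap])).not_ge hz

lemma openCube_eq_pi : openCube q = Set.univ.pi fun _ => Set.Ioo (-1) 1 := by
  ext; simp [openCube]

lemma exists_abs_eq_one_of_mem_frontier_openCube {v : Fin q → ℝ}
    (hv : v ∈ frontier (openCube q)) : ∃ i, |v i| = 1 := by
  rw [openCube_eq_pi, frontier, closure_pi_set, interior_pi_set Set.finite_univ] at hv
  simp only [closure_Ioo (by norm_num : (-1 : ℝ) ≠ 1), interior_Ioo, Set.mem_sdiff,
    Set.mem_univ_pi, not_forall] at hv
  obtain ⟨hcl, i, hi⟩ := hv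
  exact ⟨i, by grind⟩

end Cube

theorem image_frontier_subset_general {q : ℕ} :
    Bmap '' frontier (openCube q) ⊆ frontier (invRegion q) := by
  rintro _ ⟨ζ, hζ, rfl⟩
  obtain ⟨i, hi⟩ := exists_abs_eq_one_of_mem_frontier_openCube hζ
  refine ⟨?_, fun h => Bmap_notMem_invRegion hi (interior_subset h)⟩
  have hcube : Bmap '' openCube q ⊆ invRegion q :=
    Set.image_subset_iff.2 fun _ => Bmap_mem_invRegion
  exact closure_mono hcube (image_closure_subset_closure_image continuous_Bmap ⟨ζ, hζ.1, rfl⟩)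

/-- For `q ≥ 1`, `B` carries the frontier of the open unit cube into the frontier of the
invertible region: `B(∂D_ζ) ⊆ ∂D_θ`. -/
theorem image_frontier_subset {q : ℕ} (hq : 1 ≤ q) :
    Bmap '' frontier (openCube q) ⊆ frontier (invRegion q) :=
  image_frontier_subset_general
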